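/- Let H be a d-dimensional complex Hilbert space with orthonormal bases {ψ_j}_{j=1}^d and {φ_j}_{j=1}^d, η_1,…,η_d positive reals with Σ_j η_j² = 1, Ψ_η := Σ_j η_j ψ_j ⊗ φ_j ∈ H ⊗ H, and α > 0. Let {p_a}_{a=1}^{d²} be an orthonormal basis of H ⊗ H and let L_a be the (unique) linear operators on H with p_a = √(d/α)·(𝕀 ⊗ L_a)Ψ_η. Let (M_i^{(J)})_{i ∈ I, J ∈ 𝒥} be a finite family of linear operators on H (the king's measurement operators). Assume the solution condition: for every J ∈ 𝒥, every a ∈ {1,…,d²}, and every i ≠ i' in I, at most one of ⟨p_a, (𝕀 ⊗ M_i^{(J)})Ψ_η⟩ and ⟨p_a, (𝕀 ⊗ M_{i'}^{(J)})Ψ_η⟩ is nonzero. Then, setting X^{(J,i)} := {a : ⟨L_a, M_i^{(J)}⟩_Sc ≠ 0}, one has: (a) ⟨L_a, L_{a'}⟩_Sc = α·δ_{aa'} for all a, a'; (b) X^{(J,i)} ∩ X^{(J,i')} = ∅ for every J and every i ≠ i'; and (c) M_i^{(J)} = (1/α) Σ_{a ∈ X^{(J,i)}} ⟨L_a, M_i^{(J)}⟩_Sc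 · L_a for every (J,i). -/

import Mathlib

open scoped Matrix Classical

/-- The elementary tensor `u ⊗ v` of two vectors of `ℂ^d`, realized in
`ℂ^d ⊗ ℂ^d ≅ ℂ^(d×d)`. -/
noncomputable def tensVec {d : ℕ} (u v : EuclideanSpace ℂ (Fin d)) :
    EuclideanSpace ℂ (Fin d × Fin d) :=
  (EuclideanSpace.equiv (Fin d × Fin d) ℂ).symm fun p => u p.1 * v p.2

/-- The operator `𝕀 ⊗ L` on `ℂ^d ⊗ ℂ^d ≅ ℂ^(d×d)`, acting as the identity on the
first tensor factor and as the matrix `L` on the second. -/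
noncomputable def idTensor {d : ℕ} (L : Matrix (Fin d) (Fin d) ℂ) :
    EuclideanSpace ℂ (Fin d × Fin d) →ₗ[ℂ] EuclideanSpace ℂ (Fin d × Fin d) :=
  Matrix.toEuclideanLin (Matrix.of fun p q : Fin d × Fin d =>
    (if p.1 = q.1 then (1 : ℂ) else 0) * L p.2 q.2)

/-- The sesquilinear form `⟨A,B⟩_Sc := d ∑_j η_j² ⟨φ_j, A†B φ_j⟩` on operators
(matrices) on `ℂ^d`. -/
noncomputable def ScInner {d : ℕ} (φ : Fin d → EuclideanSpace ℂ (Fin d)) (η : Fin d → ℝ)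
    (A B : Matrix (Fin d) (Fin d) ℂ) : ℂ :=
  (d : ℂ) * ∑ j, ((η j ^ 2 : ℝ) : ℂ) *
    (inner ℂ (φ j) (Matrix.toEuclideanLin (Aᴴ * B) (φ j)) : ℂ)

/-!
Since the `ψ_j` are orthonormal, `⟨(𝕀 ⊗ A)Ψ_η, (𝕀 ⊗ B)Ψ_η⟩ = ∑_j η_j² ⟨A φ_j, B φ_j⟩`, so
`⟨A, B⟩_Sc = d ⟨(𝕀 ⊗ A)Ψ_η, (𝕀 ⊗ B)Ψ_η⟩`, and `A ↦ (𝕀 ⊗ A)Ψ_η` is injective because the `η_j`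
are nonzero and the `φ_j` span `H`. Orthonormality of `p_a = √(d/α) (𝕀 ⊗ L_a)Ψ_η` is then (a);
`⟨L_a, N⟩_Sc` vanishes exactly when `⟨p_a, (𝕀 ⊗ N)Ψ_η⟩` does, which turns the solution condition
into (b); and expanding `(𝕀 ⊗ M)Ψ_η` in the basis `p` and pulling back along the injective map
gives (c).
-/

open Kronecker

section IdTensor

variable {d : ℕ}

lemma tensVec_apply (u v : EuclideanSpace ℂ (Fin d)) (q : Fin d × Fin d) :
    tensVec u v q = u q.1 * v q.2 := rfl

lemma idTensor_eq_toEuclideanLin_kronecker (L : Matrix (Fin d) (Fin d) ℂ) :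
    idTensor L = Matrix.toEuclideanLin (1 ⊗ₖ L) := rfl

lemma inner_tensVec (u v u' v' : EuclideanSpace ℂ (Fin d)) :
    inner ℂ (tensVec u v) (tensVec u' v') = inner ℂ u u' * inner ℂ v v' := by
  simp only [PiLp.inner_apply, RCLike.inner_apply, tensVec_apply, map_mul,
    Fintype.sum_prod_type, Finset.sum_mul_sum]
  exact Finset.sum_congr rfl fun _ _ => Finset.sum_congr rfl fun _ _ => by ring

lemma idTensor_tensVec (L : Matrix (Fin d) (Fin d) ℂ) (u v : EuclideanSpace ℂ (Fin d)) :
    idTensor L (tensVec u v) = tensVec u (Matrix.toEuclideanLin L v) := by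
  ext q
  simp only [idTensor_eq_toEuclideanLin_kronecker, Matrix.toLpLin_apply, Matrix.mulVec, dotProduct,
    Matrix.kroneckerMap_apply, Matrix.one_apply, ite_mul, one_mul, zero_mul, tensVec_apply,
    Fintype.sum_prod_type, Finset.sum_ite_irrel, Finset.sum_const_zero, Finset.sum_ite_eq,
    Finset.mem_univ, ↓reduceIte]
  rw [Finset.mul_sum]
  exact Finset.sum_congr rfl fun _ _ => by ring

noncomputable def idTensorAt (x : EuclideanSpace ℂ (Fin d × Fin d)) :
    Matrix (Fin d) (Fin d) ℂ →ₗ[ℂ] EuclideanSpace ℂ (Fin d × Fin d) :=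
  LinearMap.applyₗ x ∘ₗ Matrix.toEuclideanLin.toLinearMap ∘ₗ Matrix.kroneckerBilinear (R := ℂ) 1

lemma idTensorAt_apply (x : EuclideanSpace ℂ (Fin d × Fin d)) (A : Matrix (Fin d) (Fin d) ℂ) :
    idTensorAt x A = idTensor A x := rfl

lemma inner_idTensor_sum_tensVec {ψ : Fin d → EuclideanSpace ℂ (Fin d)} (hψ : Orthonormal ℂ ψ)
    (φ : Fin d → EuclideanSpace ℂ (Fin d)) (η : Fin d → ℝ) (A B : Matrix (Fin d) (Fin d) ℂ) :
    inner ℂ (idTensor A (∑ j, (η j : ℂ) • tensVec (ψ j) (φ j)))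
        (idTensor B (∑ j, (η j : ℂ) • tensVec (ψ j) (φ j)))
      = ∑ j, ((η j ^ 2 : ℝ) : ℂ) *
          inner ℂ (Matrix.toEuclideanLin A (φ j)) (Matrix.toEuclideanLin B (φ j)) := by
  simp only [map_sum, map_smul, idTensor_tensVec, inner_sum, sum_inner, inner_smul_left,
    inner_smul_right, inner_tensVec, orthonormal_iff_ite.mp hψ, Complex.conj_ofReal, boole_mul,
    mul_ite, mul_zero, Finset.sum_ite_eq', Finset.mem_univ, if_true]
  push_cast
  exact Finset.sum_congr rfl fun _ _ => by ring

lemma scInner_eq_sum_inner (φ : Fin d → EuclideanSpace ℂ (Fin d)) (η : Fin d → ℝ)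
    (A B : Matrix (Fin d) (Fin d) ℂ) :
    ScInner φ η A B = d * ∑ j, ((η j ^ 2 : ℝ) : ℂ) *
      inner ℂ (Matrix.toEuclideanLin A (φ j)) (Matrix.toEuclideanLin B (φ j)) := by
  simp only [ScInner, Matrix.toLpLin_mul_same, LinearMap.comp_apply,
    Matrix.toEuclideanLin_conjTranspose_eq_adjoint, LinearMap.adjoint_inner_right]

lemma scInner_eq_mul_inner_idTensor {ψ : Fin d → EuclideanSpace ℂ (Fin d)}
    (hψ : Orthonormal ℂ ψ) (φ : Fin d → EuclideanSpace ℂ (Fin d)) (η : Fin d → ℝ)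
    (A B : Matrix (Fin d) (Fin d) ℂ) :
    ScInner φ η A B = d * inner ℂ (idTensor A (∑ j, (η j : ℂ) • tensVec (ψ j) (φ j)))
        (idTensor B (∑ j, (η j : ℂ) • tensVec (ψ j) (φ j))) := by
  rw [scInner_eq_sum_inner, inner_idTensor_sum_tensVec hψ]

lemma idTensorAt_sum_tensVec_injective {ψ : Fin d → EuclideanSpace ℂ (Fin d)}
    (hψ : Orthonormal ℂ ψ) (φ : Module.Basis (Fin d) ℂ (EuclideanSpace ℂ (Fin d))) {η : Fin d → ℝ}
    (hη : ∀ j, η j ≠ 0) :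
    Function.Injective (idTensorAt (∑ j, (η j : ℂ) • tensVec (ψ j) (φ j))) := by
  rw [← LinearMap.ker_eq_bot, LinearMap.ker_eq_bot']
  intro C hC
  have hsum : ∑ j, η j ^ 2 * ‖Matrix.toEuclideanLin C (φ j)‖ ^ 2 = 0 := by
    have hCC := inner_idTensor_sum_tensVec hψ φ η C C
    rw [← idTensorAt_apply, hC, inner_zero_left] at hCC
    simp only [inner_self_eq_norm_sq_to_K] at hCC
    apply Complex.ofReal_injective
    push_cast at hCC ⊢
    exact hCC.symm
  have hφ : ∀ j, Matrix.toEuclideanLin C (φ j) = 0 := fun j => by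
    have hj := (Finset.sum_eq_zero_iff_of_nonneg fun j _ => by positivity).mp hsum j
      (Finset.mem_univ j)
    simpa [hη j] using hj
  exact Matrix.toEuclideanLin.injective (φ.ext fun j => by simp [hφ j])

end IdTensor

section ScaledOrthonormalBasis

variable {ι 𝕜 E : Type*} [RCLike 𝕜] [NormedAddCommGroup E] [InnerProductSpace 𝕜 E]

lemma inner_eq_ite_of_orthonormal_eq_smul [DecidableEq ι] {b v : ι → E} (hb : Orthonormal 𝕜 b)
    {c : ℝ} (hbv : ∀ a, b a = (c : 𝕜) • v a) (a a' : ι) :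
    ((c ^ 2 : ℝ) : 𝕜) * inner 𝕜 (v a) (v a') = if a = a' then 1 else 0 := by
  rw [← orthonormal_iff_ite.mp hb, hbv, hbv, inner_smul_left, inner_smul_right,
    RCLike.conj_ofReal]
  push_cast
  ring

lemma eq_smul_sum_inner_smul_of_orthonormalBasis_eq_smul [Fintype ι] {V : Type*}
    [AddCommGroup V] [Module 𝕜 V] {T : V →ₗ[𝕜] E} (hT : Function.Injective T)
    (b : OrthonormalBasis ι 𝕜 E) {L : ι → V} {c : ℝ} (hbL : ∀ a, b a = (c : 𝕜) • T (L a))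
    (x : V) :
    x = ((c ^ 2 : ℝ) : 𝕜) • ∑ a, inner 𝕜 (T (L a)) (T x) • L a := by
  apply hT
  conv_lhs => rw [← b.sum_repr' (T x)]
  simp only [map_smul, map_sum, Finset.smul_sum, hbL, inner_smul_left, RCLike.conj_ofReal,
    smul_smul]
  push_cast
  exact Finset.sum_congr rfl fun _ _ => by congr 1; ring

end ScaledOrthonormalBasis

theorem mean_king_solution_gives_error_operators_general
    (d : ℕ) (hd : 1 ≤ d)
    (ψ φ : OrthonormalBasis (Fin d) ℂ (EuclideanSpace ℂ (Fin d)))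
    (η : Fin d → ℝ) (hη : ∀ j, 0 < η j)
    (α : ℝ) (hα : 0 < α)
    (Ψ : EuclideanSpace ℂ (Fin d × Fin d))
    (hΨ : Ψ = ∑ j, ((η j : ℝ) : ℂ) • tensVec (ψ j) (φ j))
    (p : OrthonormalBasis (Fin (d ^ 2)) ℂ (EuclideanSpace ℂ (Fin d × Fin d)))
    (L : Fin (d ^ 2) → Matrix (Fin d) (Fin d) ℂ)
    (hL : ∀ a : Fin (d ^ 2),
      (p a : EuclideanSpace ℂ (Fin d × Fin d))
        = ((Real.sqrt (d / α) : ℝ) : ℂ) • idTensor (L a) Ψ)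
    {𝒥 I : Type*}
    (M : 𝒥 → I → Matrix (Fin d) (Fin d) ℂ)
    (hsol : ∀ (Jm : 𝒥) (a : Fin (d ^ 2)) (i i' : I), i ≠ i' →
      (inner ℂ (p a : EuclideanSpace ℂ (Fin d × Fin d)) (idTensor (M Jm i) Ψ) : ℂ) = 0 ∨
      (inner ℂ (p a : EuclideanSpace ℂ (Fin d × Fin d)) (idTensor (M Jm i') Ψ) : ℂ) = 0) :
    (∀ a a' : Fin (d ^ 2),
      ScInner (fun j => φ j) η (L a) (L a') = if a = a' then (α : ℂ) else 0) ∧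
    (∀ (Jm : 𝒥) (i i' : I), i ≠ i' →
      {a : Fin (d ^ 2) | ScInner (fun j => φ j) η (L a) (M Jm i) ≠ 0} ∩
        {a : Fin (d ^ 2) | ScInner (fun j => φ j) η (L a) (M Jm i') ≠ 0} = ∅) ∧
    (∀ (Jm : 𝒥) (i : I),
      M Jm i = ((α : ℝ) : ℂ)⁻¹ •
        ∑ a ∈ Finset.univ.filter
            (fun a : Fin (d ^ 2) => ScInner (fun j => φ j) η (L a) (M Jm i) ≠ 0),
          ScInner (fun j => φ j) η (L a) (M Jm i) • L a) := by
  have hSc (A B) : ScInner (fun j => φ j) η A B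
      = d * inner ℂ (idTensorAt Ψ A) (idTensorAt Ψ B) := by
    subst hΨ
    simpa only [idTensorAt_apply] using scInner_eq_mul_inner_idTensor ψ.orthonormal _ _ A B
  have hT : Function.Injective (idTensorAt Ψ) := by
    subst hΨ
    exact idTensorAt_sum_tensVec_injective ψ.orthonormal φ.toBasis fun j => (hη j).ne'
  simp only [← idTensorAt_apply] at hL hsol
  generalize hc : √(d / α) = c at hL
  have hdα : 0 < (d : ℝ) / α := div_pos (Nat.cast_pos.mpr hd) hα
  have hc0 : c ≠ 0 := hc ▸ (Real.sqrt_pos.mpr hdα).ne'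
  have hα0 : (α : ℂ) ≠ 0 := Complex.ofReal_ne_zero.mpr hα.ne'
  have hdc : (d : ℂ) = α * ((c ^ 2 : ℝ) : ℂ) := by
    rw [← hc, Real.sq_sqrt hdα.le]
    push_cast
    field_simp
  refine ⟨fun a a' => ?_, fun Jm i i' hii' => ?_, fun Jm i => ?_⟩
  · rw [hSc, hdc, mul_assoc]
    simpa using congrArg ((α : ℂ) * ·) (inner_eq_ite_of_orthonormal_eq_smul p.orthonormal hL a a')
  · ext a
    simpa [hL, hSc, hdc, inner_smul_left, hc0, hα.ne', or_iff_not_imp_left]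
      using hsol Jm a i i' hii'
  · rw [Finset.sum_filter_of_ne fun a _ h => ?coeff_ne_zero]
    case coeff_ne_zero => exact fun h0 => h (by rw [h0, zero_smul])
    conv_lhs => rw [eq_smul_sum_inner_smul_of_orthonormalBasis_eq_smul hT p hL (M Jm i)]
    simp only [hSc, hdc, mul_assoc, mul_smul, ← Finset.smul_sum, inv_smul_smul₀ hα0]
    -- the two coercions `ℝ → ℂ` left here, `RCLike.ofReal` and `Complex.ofReal`, agree by `rfl`
    rfl

/-- Theorem 3 of the paper: if Alice's rank-one PVM `{|p_a⟩⟨p_a|}` together with the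
initial entangled state `Ψ_η` solves the mean king's problem for the king's
measurement operators `M_i^{(J)}`, then the operators `L_a` defined by
`p_a = √(d/α) (𝕀 ⊗ L_a)Ψ_η` satisfy: (a) `⟨L_a, L_{a'}⟩_Sc = α δ_{aa'}` (condition
(c3')); (b) the index sets `X^{(J,i)} = {a : ⟨L_a, M_i^{(J)}⟩_Sc ≠ 0}` are disjoint
for distinct outcomes of the same measurement (condition (c2')); and (c)
`M_i^{(J)} = (1/α) ∑_{a ∈ X^{(J,i)}} ⟨L_a, M_i^{(J)}⟩_Sc L_a` (condition (c1')). -/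
theorem mean_king_solution_gives_error_operators
    (d : ℕ) (hd : 1 ≤ d)
    (ψ φ : OrthonormalBasis (Fin d) ℂ (EuclideanSpace ℂ (Fin d)))
    (η : Fin d → ℝ) (hη : ∀ j, 0 < η j) (hη1 : ∑ j, η j ^ 2 = 1)
    (α : ℝ) (hα : 0 < α)
    (Ψ : EuclideanSpace ℂ (Fin d × Fin d))
    (hΨ : Ψ = ∑ j, ((η j : ℝ) : ℂ) • tensVec (ψ j) (φ j))
    (p : OrthonormalBasis (Fin (d ^ 2)) ℂ (EuclideanSpace ℂ (Fin d × Fin d)))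
    (L : Fin (d ^ 2) → Matrix (Fin d) (Fin d) ℂ)
    (hL : ∀ a : Fin (d ^ 2),
      (p a : EuclideanSpace ℂ (Fin d × Fin d))
        = ((Real.sqrt (d / α) : ℝ) : ℂ) • idTensor (L a) Ψ)
    {𝒥 I : Type*} [Fintype 𝒥] [Fintype I]
    (M : 𝒥 → I → Matrix (Fin d) (Fin d) ℂ)
    (hsol : ∀ (Jm : 𝒥) (a : Fin (d ^ 2)) (i i' : I), i ≠ i' →
      (inner ℂ (p a : EuclideanSpace ℂ (Fin d × Fin d)) (idTensor (M Jm i) Ψ) : ℂ) = 0 ∨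
      (inner ℂ (p a : EuclideanSpace ℂ (Fin d × Fin d)) (idTensor (M Jm i') Ψ) : ℂ) = 0) :
    (∀ a a' : Fin (d ^ 2),
      ScInner (fun j => φ j) η (L a) (L a') = if a = a' then (α : ℂ) else 0) ∧
    (∀ (Jm : 𝒥) (i i' : I), i ≠ i' →
      {a : Fin (d ^ 2) | ScInner (fun j => φ j) η (L a) (M Jm i) ≠ 0} ∩
        {a : Fin (d ^ 2) | ScInner (fun j => φ j) η (L a) (M Jm i') ≠ 0} = ∅) ∧
    (∀ (Jm : 𝒥) (i : I),
      M Jm i = ((α : ℝ) : ℂ)⁻¹ •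
        ∑ a ∈ Finset.univ.filter
            (fun a : Fin (d ^ 2) => ScInner (fun j => φ j) η (L a) (M Jm i) ≠ 0),
          ScInner (fun j => φ j) η (L a) (M Jm i) • L a) :=
  mean_king_solution_gives_error_operators_general d hd ψ φ η hη α hα Ψ hΨ p L hL M hsol
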